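/- If X ∈ M_m ⊗ M_n is positive semidefinite, then ‖X‖_{S(k)} = sup{ ⟨v|X|v⟩ : ‖v‖ = 1, SR(v) ≤ k }; that is, for positive semidefinite operators the supremum defining the S(k)-norm may be restricted to the diagonal case v = w. -/

import Mathlib

open scoped BigOperators

noncomputable section

/-- Elementary tensor of two vectors. -/
def tens {m n : ℕ} (a : Fin m → ℂ) (b : Fin n → ℂ) : Fin m × Fin n → ℂ :=
  fun p => a p.1 * b p.2

/-- Inner product `⟨w|v⟩`, conjugate-linear in the first argument. -/
def ip {ι : Type} [Fintype ι] (w v : ι → ℂ) : ℂ :=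
  ∑ i, (starRingEnd ℂ) (w i) * v i

/-- Euclidean norm. -/
def nrm {ι : Type} [Fintype ι] (v : ι → ℂ) : ℝ :=
  Real.sqrt (∑ i, Complex.normSq (v i))

/-- Schmidt rank at most `k`: `v` is a sum of `k` elementary tensors. -/
def SRle {m n : ℕ} (k : ℕ) (v : Fin m × Fin n → ℂ) : Prop :=
  ∃ (a : Fin k → Fin m → ℂ) (b : Fin k → Fin n → ℂ),
    v = fun p => ∑ l, a l p.1 * b l p.2

/-- The `s(k)`-vector norm. -/
def snorm {m n : ℕ} (k : ℕ) (v : Fin m × Fin n → ℂ) : ℝ :=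
  sSup { r : ℝ | ∃ w : Fin m × Fin n → ℂ, nrm w = 1 ∧ SRle k w ∧ r = ‖ip w v‖ }

/-- The `S(k)`-operator norm. -/
def Snorm {m n : ℕ} (k : ℕ) (X : Matrix (Fin m × Fin n) (Fin m × Fin n) ℂ) : ℝ :=
  sSup { r : ℝ | ∃ v w : Fin m × Fin n → ℂ, nrm v = 1 ∧ nrm w = 1 ∧ SRle k v ∧ SRle k w ∧
    r = ‖ip w (X.mulVec v)‖ }

/-- `k`-block positivity: `⟨v|X|v⟩ ≥ 0` for all unit vectors of Schmidt rank at most `k`. -/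
def kBlockPos {m n : ℕ} (k : ℕ) (X : Matrix (Fin m × Fin n) (Fin m × Fin n) ℂ) : Prop :=
  ∀ v : Fin m × Fin n → ℂ, nrm v = 1 → SRle k v → 0 ≤ (ip v (X.mulVec v)).re

open scoped ComplexOrder Matrix InnerProductSpace

/-! Write `X = B†B`. Then `⟨w|X|v⟩ = ⟨Bw|Bv⟩`, so Cauchy–Schwarz and AM–GM give
`|⟨w|X|v⟩| ≤ (⟨v|X|v⟩ + ⟨w|X|w⟩) / 2`, while `|⟨v|X|v⟩| = ⟨v|X|v⟩`. Hence every off-diagonal value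
is dominated by the supremum of the diagonal ones, which are themselves off-diagonal values. -/

theorem sSup_offDiag_eq_sSup_diag {α : Type*} {p : α → Prop} {f : α → α → ℝ} {g : α → ℝ}
    (hdiag : ∀ v, p v → f v v = g v) (hle : ∀ v w, p v → p w → f w v ≤ (g v + g w) / 2) :
    sSup {r | ∃ v w, p v ∧ p w ∧ r = f w v} = sSup {r | ∃ v, p v ∧ r = g v} := by
  set S := {r | ∃ v w, p v ∧ p w ∧ r = f w v}
  set D := {r | ∃ v, p v ∧ r = g v}
  have hDS : D ⊆ S := fun r ⟨v, hv, hr⟩ => ⟨v, v, hv, hv, hr.trans (hdiag v hv).symm⟩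
  rcases D.eq_empty_or_nonempty with hD | hD
  · have hS : S = ∅ := Set.eq_empty_of_forall_notMem fun r ⟨v, _, hv, _, _⟩ =>
      hD.subset ⟨v, hv, rfl⟩
    rw [hS, hD]
  by_cases hbdd : BddAbove D
  · have hSD : ∀ r ∈ S, r ≤ sSup D := by
      rintro r ⟨v, w, hv, hw, rfl⟩
      have := le_csSup hbdd ⟨v, hv, rfl⟩
      have := le_csSup hbdd ⟨w, hw, rfl⟩
      linarith [hle v w hv hw]
    exact le_antisymm (csSup_le (hD.mono hDS) hSD) (csSup_le_csSup ⟨_, hSD⟩ hD hDS)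
  · -- both suprema are then the junk value `0`
    rw [Real.sSup_of_not_bddAbove hbdd, Real.sSup_of_not_bddAbove fun hS => hbdd (hS.mono hDS)]

section InnerProduct

variable {ι κ : Type} [Fintype ι] [Fintype κ]

theorem ip_eq_inner (w v : ι → ℂ) :
    ip w v = ⟪(WithLp.toLp 2 w : EuclideanSpace ℂ ι), WithLp.toLp 2 v⟫_ℂ := by
  simp [ip, PiLp.inner_apply, mul_comm]

theorem nrm_eq_norm (v : ι → ℂ) : nrm v = ‖(WithLp.toLp 2 v : EuclideanSpace ℂ ι)‖ := by
  simp [nrm, EuclideanSpace.norm_eq, Complex.sq_norm]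

theorem norm_ip_le (w v : ι → ℂ) : ‖ip w v‖ ≤ nrm w * nrm v := by
  rw [ip_eq_inner, nrm_eq_norm, nrm_eq_norm]
  exact norm_inner_le_norm _ _

theorem ip_self_eq_nrm_sq (v : ι → ℂ) : ip v v = ((nrm v ^ 2 : ℝ) : ℂ) := by
  rw [ip_eq_inner, nrm_eq_norm, inner_self_eq_norm_sq_to_K]
  norm_cast

theorem ip_conjTranspose_mul_self_mulVec (B : Matrix κ ι ℂ) (w v : ι → ℂ) :
    ip w ((Bᴴ * B) *ᵥ v) = ip (B *ᵥ w) (B *ᵥ v) := by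
  change star w ⬝ᵥ _ = star (B *ᵥ w) ⬝ᵥ _
  rw [← Matrix.mulVec_mulVec, Matrix.dotProduct_mulVec, Matrix.star_mulVec]

end InnerProduct

namespace Matrix.PosSemidef

variable {ι : Type} [Fintype ι] {X : Matrix ι ι ℂ}

theorem exists_ip_mulVec_eq (hX : X.PosSemidef) :
    ∃ B : Matrix ι ι ℂ, ∀ w v, ip w (X *ᵥ v) = ip (B *ᵥ w) (B *ᵥ v) := by
  classical
  obtain ⟨B, rfl⟩ : ∃ B : Matrix ι ι ℂ, X = star B * B := by
    open scoped MatrixOrder in exact CStarAlgebra.nonneg_iff_eq_star_mul_self.mp hX.nonneg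
  exact ⟨B, ip_conjTranspose_mul_self_mulVec B⟩

theorem norm_ip_self_mulVec (hX : X.PosSemidef) (v : ι → ℂ) :
    ‖ip v (X *ᵥ v)‖ = (ip v (X *ᵥ v)).re := by
  obtain ⟨B, hB⟩ := hX.exists_ip_mulVec_eq
  rw [hB, ip_self_eq_nrm_sq, Complex.norm_real, Complex.ofReal_re,
    Real.norm_of_nonneg (sq_nonneg _)]

theorem norm_ip_mulVec_le (hX : X.PosSemidef) (v w : ι → ℂ) :
    ‖ip w (X *ᵥ v)‖ ≤ ((ip v (X *ᵥ v)).re + (ip w (X *ᵥ w)).re) / 2 := by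
  obtain ⟨B, hB⟩ := hX.exists_ip_mulVec_eq
  simp only [hB, ip_self_eq_nrm_sq, Complex.ofReal_re]
  calc ‖ip (B *ᵥ w) (B *ᵥ v)‖ ≤ nrm (B *ᵥ w) * nrm (B *ᵥ v) := norm_ip_le _ _
    _ ≤ (nrm (B *ᵥ v) ^ 2 + nrm (B *ᵥ w) ^ 2) / 2 := by
      nlinarith [sq_nonneg (nrm (B *ᵥ v) - nrm (B *ᵥ w))]

end Matrix.PosSemidef

/-- If `X ∈ M_m ⊗ M_n` is positive semidefinite, then
`‖X‖_{S(k)} = sup{ ⟨v|X|v⟩ : ‖v‖ = 1, SR(v) ≤ k }`: the supremum defining the `S(k)`-norm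
may be restricted to the diagonal case `v = w`. -/
theorem Snorm_psd_diagonal (m n k : ℕ)
    (X : Matrix (Fin m × Fin n) (Fin m × Fin n) ℂ) (hX : X.PosSemidef) :
    Snorm k X =
      sSup { r : ℝ | ∃ v : Fin m × Fin n → ℂ,
        nrm v = 1 ∧ SRle k v ∧ r = (ip v (X.mulVec v)).re } := by
  have h := sSup_offDiag_eq_sSup_diag (p := fun v => nrm v = 1 ∧ SRle k v)
    (fun v _ => hX.norm_ip_self_mulVec v) (fun v w _ _ => hX.norm_ip_mulVec_le v w)
  simp only [and_assoc] at h
  rw [Snorm, ← h]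
  congr 1
  ext r
  exact exists₂_congr fun v w => by tauto
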